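/- Let N ≥ 2, T ≥ 1 be integers, let 0 < ε < 1/N, η > 0 and 0 < ν ≤ 1, and let R_{η,ν}(p) = (1/η)·Σ_{i=1}^N p_i log p_i − (1/ν)·Σ_{i=1}^N log p_i. Let g_1, …, g_T ∈ ℝ^N be arbitrary vectors, and for t = 1, …, T+1 let p_t be a minimizer of Φ_t(p) = ⟨p, Σ_{s<t} g_s⟩ + R_{η,ν}(p) over the truncated simplex Δ_N^ε. Then for every p* ∈ Δ_N^ε there exist points z_1, …, z_T, with z_t on the line segment connecting p_t and p_{t+1}, such that Σ_{t=1}^T ⟨g_t, p_t − p*⟩ ≤ (N/ν)·log(1/ε) + (1/η)·log N + (η/2)·Σ_{t=1}^T Σ_{i=1}^N z_{t,i}·g_{t,i}². -/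

import Mathlib

open Finset

/-- The `ε`-truncated probability simplex in `ℝ^N`: vectors with all coordinates at least `ε`
summing to one. -/
def truncSimplex (N : ℕ) (ε : ℝ) : Set (Fin N → ℝ) :=
  {q | (∀ i, ε ≤ q i) ∧ ∑ i, q i = 1}

/-- The regularizer `R_{η,ν}(p) = (1/η)·∑ i, p i log (p i) − (1/ν)·∑ i, log (p i)`, the sum of a
negative-entropy component and a log-barrier component. -/
noncomputable def entLogBarrier (N : ℕ) (η ν : ℝ) (q : Fin N → ℝ) : ℝ :=
  (1 / η) * ∑ i, q i * Real.log (q i) - (1 / ν) * ∑ i, Real.log (q i)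

/-!
Be the leader: with `Fₜ q = ⟨q, ∑_{s<t} g s⟩ + R q` we have `F_{t+1} = Fₜ + ⟨g t, ·⟩`, so the
regret against `p*` telescopes and, as `F_T (p T) ≤ F_T p*`, is at most `∑ₜ δₜ + R p* - R (p 0)`
with `δₜ = ⟨g t, p t - p (t+1)⟩ + Fₜ (p t) - Fₜ (p (t+1))`. Entropy lies in `[-log N, 0]` and each
`log pᵢ` in `[log ε, 0]`, which bounds `R p* - R (p 0)`. For `δₜ`, expand `Fₜ` to second order
along the segment from `p t` to `p (t+1)`: the first-order term is nonnegative since `p t`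
minimises `Fₜ`, and the Hessian of `R` dominates `diag (1 / (η zᵢ))` at the intermediate point
`z`, so `Fₜ (p (t+1)) - Fₜ (p t) ≥ ∑ᵢ Δᵢ² / (2 η zᵢ)`; Young's inequality absorbs the linear term
and leaves `(η/2) ∑ᵢ zᵢ (g t i)²`.
-/

open Real Set

lemma HasDerivAt.nonneg_of_isMinOn_Icc {φ : ℝ → ℝ} {c : ℝ} (hφ : HasDerivAt φ c 0)
    (hmin : IsMinOn φ (Icc 0 1) 0) : 0 ≤ c := by
  have hcone : (1 : ℝ) ∈ posTangentConeAt (Icc 0 1) 0 :=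
    mem_posTangentConeAt_of_segment_subset (by simp [segment_eq_Icc])
  simpa using hmin.localize.hasFDerivWithinAt_nonneg hφ.hasDerivWithinAt.hasFDerivWithinAt hcone

lemma exists_mem_Ioo_eq_add_deriv_add_half_deriv2 {φ φ' φ'' : ℝ → ℝ}
    (hφ : ∀ s ∈ Icc (0 : ℝ) 1, HasDerivAt φ (φ' s) s)
    (hφ' : ∀ s ∈ Icc (0 : ℝ) 1, HasDerivAt φ' (φ'' s) s) :
    ∃ σ ∈ Ioo (0 : ℝ) 1, φ 1 = φ 0 + φ' 0 + φ'' σ / 2 := by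
  -- Rolle's theorem twice, for `ψ s = φ s - φ 0 - s φ' 0 - A s²` with `A` chosen so that `ψ 1 = 0`.
  set A := φ 1 - φ 0 - φ' 0
  have hψ : ∀ s ∈ Icc (0 : ℝ) 1, HasDerivAt (fun s => φ s - φ 0 - s * φ' 0 - A * s ^ 2)
      (φ' s - φ' 0 - A * (2 * s)) s := fun s hs =>
    ((((hφ s hs).sub_const (φ 0)).fun_sub (hasDerivAt_mul_const (φ' 0))).fun_sub
      ((hasDerivAt_pow 2 s).const_mul A)).congr_deriv (by ring)
  have hψ' : ∀ s ∈ Icc (0 : ℝ) 1, HasDerivAt (fun s => φ' s - φ' 0 - A * (2 * s))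
      (φ'' s - A * 2) s := fun s hs =>
    (((hφ' s hs).sub_const (φ' 0)).fun_sub
      (((hasDerivAt_id s).const_mul 2).const_mul A)).congr_deriv (by ring)
  obtain ⟨σ₁, hσ₁, hψσ₁⟩ := exists_hasDerivAt_eq_zero zero_lt_one
    (fun s hs => (hψ s hs).continuousAt.continuousWithinAt) (by simp [A])
    (fun s hs => hψ s (Ioo_subset_Icc_self hs))
  have hsub : Icc 0 σ₁ ⊆ Icc (0 : ℝ) 1 := Icc_subset_Icc_right hσ₁.2.le
  obtain ⟨σ, hσ, hψ'σ⟩ := exists_hasDerivAt_eq_zero hσ₁.1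
    (fun s hs => (hψ' s (hsub hs)).continuousAt.continuousWithinAt) (by simpa using hψσ₁.symm)
    (fun s hs => hψ' s (hsub (Ioo_subset_Icc_self hs)))
  exact ⟨σ, ⟨hσ.1, hσ.2.trans hσ₁.2⟩, by linarith⟩

lemma hasDerivAt_sum_comp_add_mul {ι : Type*} [Fintype ι] {f f' : ι → ℝ → ℝ} {a d : ι → ℝ}
    {s : ℝ} (hf : ∀ i, HasDerivAt (f i) (f' i (a i + s * d i)) (a i + s * d i)) :
    HasDerivAt (fun s => ∑ i, f i (a i + s * d i)) (∑ i, f' i (a i + s * d i) * d i) s :=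
  HasDerivAt.fun_sum fun i _ =>
    (hf i).comp s (by simpa using ((hasDerivAt_id s).mul_const (d i)).const_add (a i))

lemma mul_le_sq_div_add_mul_sq {c : ℝ} (hc : 0 < c) (x y : ℝ) :
    x * y ≤ x ^ 2 / (2 * c) + c / 2 * y ^ 2 := by
  have key : x ^ 2 / (2 * c) + c / 2 * y ^ 2 - x * y = (x - c * y) ^ 2 / (2 * c) := by
    field_simp; ring
  have : 0 ≤ (x - c * y) ^ 2 / (2 * c) := by positivity
  linarith

section Separable

variable {ι : Type*} [Fintype ι] {η : ℝ} {K : Set (ι → ℝ)} {f f' f'' : ι → ℝ → ℝ}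
  {a b : ι → ℝ}

theorem exists_mem_segment_sum_sq_div_le_sum_sub (hK : Convex ℝ K)
    (hKpos : ∀ q ∈ K, ∀ i, 0 < q i) (hf : ∀ i x, 0 < x → HasDerivAt (f i) (f' i x) x)
    (hf' : ∀ i x, 0 < x → HasDerivAt (f' i) (f'' i x) x)
    (hcurv : ∀ i x, 0 < x → (η * x)⁻¹ ≤ f'' i x)
    (hmin : IsMinOn (fun q => ∑ i, f i (q i)) K a) (ha : a ∈ K) (hb : b ∈ K) :
    ∃ z ∈ segment ℝ a b,
      ∑ i, (b i - a i) ^ 2 / (η * z i) / 2 ≤ ∑ i, f i (b i) - ∑ i, f i (a i) := by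
  set d := b - a
  have hline : ∀ s ∈ Icc (0 : ℝ) 1, ∀ i, 0 < a i + s * d i := fun s hs i => by
    simpa [d] using hKpos _ (hK.add_smul_sub_mem ha hb hs) i
  have hφ : ∀ s ∈ Icc (0 : ℝ) 1, HasDerivAt (fun s => ∑ i, f i (a i + s * d i))
      (∑ i, f' i (a i + s * d i) * d i) s := fun s hs =>
    hasDerivAt_sum_comp_add_mul fun i => hf i _ (hline s hs i)
  have hφ' : ∀ s ∈ Icc (0 : ℝ) 1, HasDerivAt (fun s => ∑ i, f' i (a i + s * d i) * d i)
      (∑ i, f'' i (a i + s * d i) * d i * d i) s := fun s hs =>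
    hasDerivAt_sum_comp_add_mul (f := fun i x => f' i x * d i) (f' := fun i x => f'' i x * d i)
      fun i => (hf' i _ (hline s hs i)).mul_const (d i)
  obtain ⟨σ, hσ, htaylor⟩ := exists_mem_Ioo_eq_add_deriv_add_half_deriv2 hφ hφ'
  have hfirst : 0 ≤ ∑ i, f' i (a i + 0 * d i) * d i :=
    (hφ 0 (left_mem_Icc.2 zero_le_one)).nonneg_of_isMinOn_Icc <| isMinOn_iff.2 fun s hs => by
      simpa [d] using isMinOn_iff.1 hmin _ (hK.add_smul_sub_mem ha hb hs)
  have hcurv_σ : ∑ i, d i ^ 2 / (η * (a i + σ * d i))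
      ≤ ∑ i, f'' i (a i + σ * d i) * d i * d i := sum_le_sum fun i _ => by
    rw [div_eq_inv_mul, mul_assoc, ← sq]
    exact mul_le_mul_of_nonneg_right (hcurv i _ (hline σ (Ioo_subset_Icc_self hσ) i))
      (sq_nonneg _)
  refine ⟨a + σ • d, segment_eq_image' ℝ a b ▸ ⟨σ, Ioo_subset_Icc_self hσ, rfl⟩, ?_⟩
  simp only [zero_mul, add_zero, one_mul, d, Pi.sub_apply, add_sub_cancel] at htaylor hfirst hcurv_σ
  simp only [Pi.add_apply, Pi.smul_apply, smul_eq_mul, d, Pi.sub_apply, ← sum_div]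
  linarith

theorem exists_mem_segment_stability_le (hη : 0 < η) (hK : Convex ℝ K)
    (hKpos : ∀ q ∈ K, ∀ i, 0 < q i) (hf : ∀ i x, 0 < x → HasDerivAt (f i) (f' i x) x)
    (hf' : ∀ i x, 0 < x → HasDerivAt (f' i) (f'' i x) x)
    (hcurv : ∀ i x, 0 < x → (η * x)⁻¹ ≤ f'' i x)
    (hmin : IsMinOn (fun q => ∑ i, f i (q i)) K a) (ha : a ∈ K) (hb : b ∈ K) (g : ι → ℝ) :
    ∃ z ∈ segment ℝ a b, ∑ i, g i * (a i - b i) + (∑ i, f i (a i) - ∑ i, f i (b i))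
      ≤ η / 2 * ∑ i, z i * g i ^ 2 := by
  obtain ⟨z, hz, hgrowth⟩ :=
    exists_mem_segment_sum_sq_div_le_sum_sub hK hKpos hf hf' hcurv hmin ha hb
  have hzpos := hKpos z (hK.segment_subset ha hb hz)
  have hyoung : ∑ i, g i * (a i - b i)
      ≤ ∑ i, (b i - a i) ^ 2 / (η * z i) / 2 + η / 2 * ∑ i, z i * g i ^ 2 := by
    rw [mul_sum, ← sum_add_distrib]
    refine sum_le_sum fun i _ => ?_
    have := mul_le_sq_div_add_mul_sq (mul_pos hη (hzpos i)) (b i - a i) (-g i)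
    rw [div_div, mul_comm (η * z i) 2]
    linarith
  exact ⟨z, hz, by linarith⟩

end Separable

section FTRL

variable {ι : Type*} [Fintype ι]

noncomputable def ftrlObjective (R : (ι → ℝ) → ℝ) (g : ℕ → ι → ℝ) (t : ℕ) (q : ι → ℝ) : ℝ :=
  (∑ i, q i * ∑ s ∈ range t, g s i) + R q

variable {R : (ι → ℝ) → ℝ} {g : ℕ → ι → ℝ}

@[simp]
lemma ftrlObjective_zero (q : ι → ℝ) : ftrlObjective R g 0 q = R q := by
  simp [ftrlObjective]

lemma ftrlObjective_succ (t : ℕ) (q : ι → ℝ) :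
    ftrlObjective R g (t + 1) q = ftrlObjective R g t q + ∑ i, g t i * q i := by
  simp only [ftrlObjective, sum_range_succ, mul_add, sum_add_distrib]
  simp only [mul_comm (q _)]
  ring

theorem sum_regret_eq (p : ℕ → ι → ℝ) (u : ι → ℝ) (T : ℕ) :
    ∑ t ∈ range T, ∑ i, g t i * (p t i - u i) =
      ∑ t ∈ range T, (∑ i, g t i * (p t i - p (t + 1) i)
          + (ftrlObjective R g t (p t) - ftrlObjective R g t (p (t + 1))))
        + (ftrlObjective R g T (p T) - ftrlObjective R g T u) + (R u - R (p 0)) := by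
  induction T with
  | zero => simp
  | succ T ih =>
    rw [sum_range_succ, ih, sum_range_succ, ftrlObjective_succ, ftrlObjective_succ]
    simp only [mul_sub, sum_sub_distrib]
    ring

theorem sum_regret_le {p : ℕ → ι → ℝ} {u : ι → ℝ} {T : ℕ}
    (hT : ftrlObjective R g T (p T) ≤ ftrlObjective R g T u) :
    ∑ t ∈ range T, ∑ i, g t i * (p t i - u i) ≤
      ∑ t ∈ range T, (∑ i, g t i * (p t i - p (t + 1) i)
          + (ftrlObjective R g t (p t) - ftrlObjective R g t (p (t + 1))))
        + (R u - R (p 0)) := by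
  rw [sum_regret_eq p u T]
  linarith

end FTRL

lemma neg_log_card_le_sum_mul_log {ι : Type*} [Fintype ι] {q : ι → ℝ} (hq0 : ∀ i, 0 ≤ q i)
    (hq1 : ∑ i, q i = 1) : -log (Fintype.card ι) ≤ ∑ i, q i * log (q i) := by
  have hcard : (0 : ℝ) < Fintype.card ι := by
    have : Nonempty ι := by
      by_contra h
      simp [not_nonempty_iff.1 h] at hq1
    exact_mod_cast Fintype.card_pos
  -- Jensen's inequality for `x log x` at the uniform weights.
  have hjensen := convexOn_mul_log.map_sum_le (t := univ) (w := fun _ => (Fintype.card ι : ℝ)⁻¹)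
    (p := q) (fun _ _ => by positivity) (by simp [hcard.ne']) (fun i _ => hq0 i)
  simp only [smul_eq_mul, ← mul_sum, hq1, mul_one, log_inv] at hjensen
  exact le_of_mul_le_mul_left hjensen (inv_pos.2 hcard)

namespace truncSimplex

variable {N : ℕ} {ε : ℝ} {q : Fin N → ℝ}

lemma convex : Convex ℝ (truncSimplex N ε) := by
  intro x hx y hy a b ha hb hab
  refine ⟨fun i => ?_, ?_⟩
  · calc ε = a * ε + b * ε := by rw [← add_mul, hab, one_mul]
      _ ≤ a * x i + b * y i := by gcongr; exacts [hx.1 i, hy.1 i]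
  · simp [sum_add_distrib, ← mul_sum, hx.2, hy.2, hab]

lemma pos (hε : 0 < ε) (hq : q ∈ truncSimplex N ε) (i : Fin N) : 0 < q i :=
  hε.trans_le (hq.1 i)

lemma le_one (hε : 0 ≤ ε) (hq : q ∈ truncSimplex N ε) (i : Fin N) : q i ≤ 1 :=
  hq.2 ▸ single_le_sum (fun j _ => hε.trans (hq.1 j)) (mem_univ i)

end truncSimplex

section EntLogBarrier

variable {N : ℕ} {ε η ν : ℝ} {q : Fin N → ℝ}

lemma entLogBarrier_le (hε : 0 < ε) (hη : 0 ≤ η) (hν : 0 ≤ ν) (hq : q ∈ truncSimplex N ε) :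
    entLogBarrier N η ν q ≤ N / ν * log (1 / ε) := by
  have hent : ∑ i, q i * log (q i) ≤ 0 := sum_nonpos fun i _ =>
    mul_log_nonpos (truncSimplex.pos hε hq i).le (truncSimplex.le_one hε.le hq i)
  have hlog : N * log ε ≤ ∑ i, log (q i) := by
    simpa using sum_le_sum fun i (_ : i ∈ Finset.univ) => log_le_log hε (hq.1 i)
  have h1 : 1 / η * ∑ i, q i * log (q i) ≤ 0 := mul_nonpos_of_nonneg_of_nonpos (by positivity) hent
  have h2 : 1 / ν * (N * log ε) ≤ 1 / ν * ∑ i, log (q i) := by gcongr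
  rw [entLogBarrier, one_div ε, log_inv]
  linarith [show N / ν * -log ε = -(1 / ν * (N * log ε)) by ring]

lemma neg_entLogBarrier_le (hε : 0 ≤ ε) (hη : 0 ≤ η) (hν : 0 ≤ ν) (hq : q ∈ truncSimplex N ε) :
    -entLogBarrier N η ν q ≤ 1 / η * log N := by
  have hq0 i : 0 ≤ q i := hε.trans (hq.1 i)
  have hent : -log N ≤ ∑ i, q i * log (q i) := by
    simpa using neg_log_card_le_sum_mul_log hq0 hq.2
  have hlog : ∑ i, log (q i) ≤ 0 := sum_nonpos fun i _ =>
    log_nonpos (hq0 i) (truncSimplex.le_one hε hq i)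
  have h1 : 1 / η * -log N ≤ 1 / η * ∑ i, q i * log (q i) := by gcongr
  have h2 : 1 / ν * ∑ i, log (q i) ≤ 0 := mul_nonpos_of_nonneg_of_nonpos (by positivity) hlog
  rw [entLogBarrier]
  linarith

lemma ftrlObjective_entLogBarrier (g : ℕ → Fin N → ℝ) (t : ℕ) :
    ftrlObjective (entLogBarrier N η ν) g t = fun q => ∑ i,
      (q i * ∑ s ∈ range t, g s i + η⁻¹ * (q i * log (q i)) - ν⁻¹ * log (q i)) := by
  ext q
  simp only [ftrlObjective, entLogBarrier, one_div, mul_sum, sum_add_distrib, sum_sub_distrib]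
  ring

theorem exists_mem_segment_entLogBarrier_stability_le (hε : 0 < ε) (hη : 0 < η) (hν : 0 ≤ ν)
    {g : ℕ → Fin N → ℝ} {t : ℕ} {a b : Fin N → ℝ}
    (hmin : IsMinOn (ftrlObjective (entLogBarrier N η ν) g t) (truncSimplex N ε) a)
    (ha : a ∈ truncSimplex N ε) (hb : b ∈ truncSimplex N ε) (v : Fin N → ℝ) :
    ∃ z ∈ segment ℝ a b, ∑ i, v i * (a i - b i)
        + (ftrlObjective (entLogBarrier N η ν) g t a - ftrlObjective (entLogBarrier N η ν) g t b)
      ≤ η / 2 * ∑ i, z i * v i ^ 2 := by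
  rw [ftrlObjective_entLogBarrier] at hmin ⊢
  refine exists_mem_segment_stability_le hη truncSimplex.convex
    (fun q hq => truncSimplex.pos hε hq)
    (f := fun i x => x * ∑ s ∈ range t, g s i + η⁻¹ * (x * log x) - ν⁻¹ * log x)
    (f' := fun i x => ∑ s ∈ range t, g s i + η⁻¹ * (log x + 1) - ν⁻¹ * x⁻¹)
    (f'' := fun i x => η⁻¹ * x⁻¹ + ν⁻¹ * (x ^ 2)⁻¹) (fun i x hx => ?_) (fun i x hx => ?_)
    (fun i x hx => ?_) hmin ha hb v
  · exact (((hasDerivAt_mul_const _).add ((hasDerivAt_mul_log hx.ne').const_mul η⁻¹)).sub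
      ((hasDerivAt_log hx.ne').const_mul ν⁻¹)).congr_deriv (by ring)
  · exact (((hasDerivAt_const x _).add (((hasDerivAt_log hx.ne').add_const 1).const_mul η⁻¹)).sub
      ((hasDerivAt_inv hx.ne').const_mul ν⁻¹)).congr_deriv (by ring)
  · rw [mul_inv]
    exact le_add_of_nonneg_right (by positivity)

end EntLogBarrier

/-- (0-indexed: `p t` is the paper's `p_{t+1}`, `g t` the paper's `g_{t+1}`.) -/
theorem ftrl_log_barrier_regret_general {N : ℕ} (T : ℕ)
    (ε η ν : ℝ) (hε0 : 0 < ε) (hη : 0 < η) (hν0 : 0 < ν)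
    (g : ℕ → Fin N → ℝ) (p : ℕ → Fin N → ℝ)
    (hp : ∀ t ≤ T, p t ∈ truncSimplex N ε ∧ ∀ q ∈ truncSimplex N ε,
      (∑ i, p t i * ∑ s ∈ Finset.range t, g s i) + entLogBarrier N η ν (p t)
        ≤ (∑ i, q i * ∑ s ∈ Finset.range t, g s i) + entLogBarrier N η ν q)
    (pstar : Fin N → ℝ) (hps : pstar ∈ truncSimplex N ε) :
    ∃ z : ℕ → Fin N → ℝ,
      (∀ t < T, z t ∈ segment ℝ (p t) (p (t + 1))) ∧
      ∑ t ∈ Finset.range T, ∑ i, g t i * (p t i - pstar i)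
        ≤ (N / ν) * Real.log (1 / ε) + (1 / η) * Real.log N
          + (η / 2) * ∑ t ∈ Finset.range T, ∑ i, z t i * (g t i) ^ 2 := by
  have hmin : ∀ t ≤ T, IsMinOn (ftrlObjective (entLogBarrier N η ν) g t) (truncSimplex N ε) (p t) :=
    fun t ht => isMinOn_iff.2 (hp t ht).2
  have hstep : ∀ t < T, ∃ z ∈ segment ℝ (p t) (p (t + 1)), _ :=
    fun t ht => exists_mem_segment_entLogBarrier_stability_le hε0 hη hν0.le (hmin t ht.le)
      (hp t ht.le).1 (hp (t + 1) ht).1 (g t)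
  choose! z hz hstability using hstep
  refine ⟨z, hz, ?_⟩
  have hregret := sum_regret_le (u := pstar) (isMinOn_iff.1 (hmin T le_rfl) pstar hps)
  have hstability_sum := sum_le_sum fun t ht => hstability t (mem_range.1 ht)
  have hRstar := entLogBarrier_le hε0 hη.le hν0.le hps
  have hR0 := neg_entLogBarrier_le hε0.le hη.le hν0.le (hp 0 T.zero_le).1
  rw [mul_sum]
  linarith

/-- **FTRL with entropy + log-barrier regularization over the truncated simplex.**
(0-indexed: `p t` is the paper's `p_{t+1}`, `g t` the paper's `g_{t+1}`.) There exist points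
`z t` on the segment connecting `p t` and `p (t+1)` such that
`∑_{t<T} ⟨g t, p t − p*⟩ ≤ (N/ν) log(1/ε) + (1/η) log N + (η/2) ∑_{t<T} ∑ i, z t i · (g t i)²`. -/
theorem ftrl_log_barrier_regret {N : ℕ} (hN : 2 ≤ N) (T : ℕ) (hT : 1 ≤ T)
    (ε η ν : ℝ) (hε0 : 0 < ε) (hε1 : ε < 1 / N) (hη : 0 < η) (hν0 : 0 < ν) (hν1 : ν ≤ 1)
    (g : ℕ → Fin N → ℝ) (p : ℕ → Fin N → ℝ)
    (hp : ∀ t ≤ T, p t ∈ truncSimplex N ε ∧ ∀ q ∈ truncSimplex N ε,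
      (∑ i, p t i * ∑ s ∈ Finset.range t, g s i) + entLogBarrier N η ν (p t)
        ≤ (∑ i, q i * ∑ s ∈ Finset.range t, g s i) + entLogBarrier N η ν q)
    (pstar : Fin N → ℝ) (hps : pstar ∈ truncSimplex N ε) :
    ∃ z : ℕ → Fin N → ℝ,
      (∀ t < T, z t ∈ segment ℝ (p t) (p (t + 1))) ∧
      ∑ t ∈ Finset.range T, ∑ i, g t i * (p t i - pstar i)
        ≤ (N / ν) * Real.log (1 / ε) + (1 / η) * Real.log N
          + (η / 2) * ∑ t ∈ Finset.range T, ∑ i, z t i * (g t i) ^ 2 :=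
  ftrl_log_barrier_regret_general T ε η ν hε0 hη hν0 g p hp pstar hps
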